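/- arXiv:1605.03912 — 2 statements merged into one kernel-verified Lean document; each statement's English description precedes it below -/
import Mathlib

section
/- There exists a constant C > 0 such that for all ξ₁, ξ₁', ξ₂, τ ∈ ℝ, writing ξ = (ξ₁, ξ₂) ∈ ℝ², and for each choice of sign ±, one has ⟨ξ⟩² ≤ C (⟨τ ± |(ξ₁ - ξ₁', ξ₂)|⟩ + ⟨τ + |ξ|²⟩ + ⟨ξ₁'⟩). -/
/-- Japanese bracket of a real number: `⟨a⟩ = (1 + a²)^{1/2}`. -/
noncomputable def jb (a : ℝ) : ℝ := Real.sqrt (1 + a ^ 2)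

/-- Euclidean norm of `(a, b) ∈ ℝ²`. -/
noncomputable def nrm (a b : ℝ) : ℝ := Real.sqrt (a ^ 2 + b ^ 2)

/-- Japanese bracket of `(a, b) ∈ ℝ²`: `⟨(a,b)⟩ = (1 + a² + b²)^{1/2}`. -/
noncomputable def jb2 (a b : ℝ) : ℝ := Real.sqrt (1 + a ^ 2 + b ^ 2)

lemma jb_ge_abs (a : ℝ) : |a| ≤ jb a := by
  rw [jb, ← Real.sqrt_sq_eq_abs]
  exact Real.sqrt_le_sqrt (by nlinarith)

lemma jb_ge_one (a : ℝ) : (1:ℝ) ≤ jb a := by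
  have h := Real.sqrt_le_sqrt (show (1:ℝ) ≤ 1 + a ^ 2 by nlinarith [sq_nonneg a])
  simpa [jb] using h

lemma nrm_nonneg (a b : ℝ) : 0 ≤ nrm a b := Real.sqrt_nonneg _

lemma nrm_sq (a b : ℝ) : nrm a b ^ 2 = a ^ 2 + b ^ 2 :=
  Real.sq_sqrt (by positivity)

lemma nrm_tri (a b c : ℝ) : nrm (a - c) b ≤ nrm a b + |c| := by
  have hab : |a| ≤ nrm a b := by
    rw [nrm, ← Real.sqrt_sq_eq_abs]
    exact Real.sqrt_le_sqrt (by nlinarith)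
  have h1 : (a - c) ^ 2 + b ^ 2 ≤ (nrm a b + |c|) ^ 2 := by
    have := nrm_sq a b
    have h2 : |a| * |c| ≤ nrm a b * |c| := by
      exact mul_le_mul_of_nonneg_right hab (abs_nonneg c)
    have h3 : -(a * c) ≤ |a| * |c| := by
      rw [← abs_mul]; exact neg_le_abs _
    nlinarith [sq_abs c, nrm_nonneg a b, abs_nonneg c]
  calc nrm (a - c) b = Real.sqrt ((a - c) ^ 2 + b ^ 2) := rfl
    _ ≤ Real.sqrt ((nrm a b + |c|) ^ 2) := Real.sqrt_le_sqrt h1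
    _ = nrm a b + |c| := Real.sqrt_sq (add_nonneg (nrm_nonneg a b) (abs_nonneg c))

/-- Symbol inequality: there is `C > 0` such that for all `ξ₁, ξ₁', ξ₂, τ` and each
sign `ε = ±1`, `⟨ξ⟩² ≤ C(⟨τ ± |(ξ₁ - ξ₁', ξ₂)|⟩ + ⟨τ + |ξ|²⟩ + ⟨ξ₁'⟩)` with `ξ = (ξ₁, ξ₂)`. -/
theorem symbol_inequality_one :
    ∃ C : ℝ, 0 < C ∧ ∀ ξ₁ ξ₁' ξ₂ τ ε : ℝ, ε = 1 ∨ ε = -1 →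
      (jb2 ξ₁ ξ₂) ^ 2
        ≤ C * (jb (τ + ε * nrm (ξ₁ - ξ₁') ξ₂) + jb (τ + (nrm ξ₁ ξ₂) ^ 2) + jb ξ₁') := by
  refine ⟨4, by norm_num, fun ξ₁ ξ₁' ξ₂ τ ε hε => ?_⟩
  set n := nrm (ξ₁ - ξ₁') ξ₂ with hn
  set m := nrm ξ₁ ξ₂ with hm
  have hjb2 : (jb2 ξ₁ ξ₂) ^ 2 = 1 + ξ₁ ^ 2 + ξ₂ ^ 2 := by rw [jb2]; exact Real.sq_sqrt (by positivity)
  have hmsq : m ^ 2 = ξ₁ ^ 2 + ξ₂ ^ 2 := nrm_sq _ _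
  have hmn : 0 ≤ m := nrm_nonneg _ _
  have hnn : 0 ≤ n := nrm_nonneg _ _
  have htri : n ≤ m + |ξ₁'| := nrm_tri _ _ _
  have hA : |τ + ε * n| ≤ jb (τ + ε * n) := jb_ge_abs _
  have hA1 : (1:ℝ) ≤ jb (τ + ε * n) := jb_ge_one _
  have hB : |τ + m ^ 2| ≤ jb (τ + m ^ 2) := jb_ge_abs _
  have hB1 : (1:ℝ) ≤ jb (τ + m ^ 2) := jb_ge_one _
  have hC1 : (1:ℝ) ≤ jb ξ₁' := jb_ge_one _
  have hC : |ξ₁'| ≤ jb ξ₁' := jb_ge_abs _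
  have habsA : -(τ + ε * n) ≤ |τ + ε * n| := neg_le_abs _
  have habsB : τ + m ^ 2 ≤ |τ + m ^ 2| := le_abs_self _
  -- m ≤ (1 + m^2)/2
  have hAM : 2 * m ≤ 1 + m ^ 2 := by nlinarith [sq_nonneg (m - 1)]
  rcases hε with rfl | rfl <;> linarith
end

section
/- There exists a constant C > 0 such that for every ξ ∈ ℝ², ∫_{{τ ∈ ℝ : (1/2)(|ξ|² - (3/2)|ξ|) ≤ |τ + |ξ|²| ≤ (3/2)(|ξ|² + (3/2)|ξ|)}} ⟨τ + |ξ|²⟩^{-1} dτ ≤ C. Consequently, for every v ∈ L²(ℝ²), the function (ξ, τ) ↦ ⟨τ + |ξ|²⟩^{-1/2} v(ξ) · χ_B(τ, ξ), where B = { (τ, ξ) : (1/2)(|ξ|² - (3/2)|ξ|) ≤ |τ + |ξ|²| ≤ (3/2)(|ξ|² + (3/2)|ξ|) }, belongs to L²(ℝ² × ℝ) with norm at most C^{1/2} ‖v‖_{L²(ℝ²)}. -/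
open MeasureTheory

noncomputable def aa (r : ℝ) : ℝ := (1 / 2) * (r ^ 2 - (3 / 2) * r)
noncomputable def bb (r : ℝ) : ℝ := (3 / 2) * (r ^ 2 + (3 / 2) * r)

lemma jb_pos (s : ℝ) : 0 < jb s := Real.sqrt_pos.2 (by positivity)
lemma one_add_aa_pos (r : ℝ) : 0 < 1 + aa r := by unfold aa; nlinarith [sq_nonneg (r - 3/4)]

lemma pointwise_bound {r τ : ℝ} (h : aa r ≤ |τ + r ^ 2|) :
    (jb (τ + r ^ 2))⁻¹ ≤ 2 / (1 + aa r) := by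
  have ha := one_add_aa_pos r
  have e1 : (1 : ℝ) ≤ jb (τ + r ^ 2) := by
    have : Real.sqrt 1 ≤ jb (τ + r ^ 2) :=
      Real.sqrt_le_sqrt (by nlinarith [sq_nonneg (τ + r ^ 2)])
    simpa using this
  have e2 : |τ + r ^ 2| ≤ jb (τ + r ^ 2) := by
    have : Real.sqrt ((τ + r ^ 2) ^ 2) ≤ jb (τ + r ^ 2) := Real.sqrt_le_sqrt (by linarith)
    simpa [Real.sqrt_sq_eq_abs] using this
  have h1 : (1 + aa r) / 2 ≤ jb (τ + r ^ 2) := by linarith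
  rw [div_eq_mul_inv]
  have := jb_pos (τ + r ^ 2)
  rw [inv_le_comm₀ this (by positivity)]
  calc (2 / (1 + aa r))⁻¹ = (1 + aa r) / 2 := by
        rw [div_eq_mul_inv, mul_inv, inv_inv, mul_comm, ← div_eq_mul_inv]
    _ ≤ jb (τ + r ^ 2) := h1

def SS (r : ℝ) : Set ℝ := {τ : ℝ | aa r ≤ |τ + r ^ 2| ∧ |τ + r ^ 2| ≤ bb r}

lemma meas_SS (r : ℝ) : MeasurableSet (SS r) := by
  have h1 : Measurable fun τ : ℝ => |τ + r ^ 2| := (measurable_id.add_const _).abs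
  exact (measurableSet_le measurable_const h1).inter (measurableSet_le h1 measurable_const)

lemma vol_SS (r : ℝ) : volume (SS r) ≤ ENNReal.ofReal (2 * bb r) := by
  calc volume (SS r) ≤ volume (Set.Icc (-(bb r) - r ^ 2) (bb r - r ^ 2)) := by
        apply measure_mono
        intro τ hτ
        have h2 := abs_le.1 hτ.2
        exact ⟨by linarith [h2.1], by linarith [h2.2]⟩
    _ = ENNReal.ofReal (2 * bb r) := by rw [Real.volume_Icc]; ring_nf

lemma arith (r : ℝ) (_hr : 0 ≤ r) : 2 / (1 + aa r) * (2 * bb r) ≤ 100 := by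
  rw [div_mul_eq_mul_div, div_le_iff₀ (one_add_aa_pos r)]
  unfold aa bb; nlinarith [sq_nonneg r, sq_nonneg (r - 1)]

lemma bb_nonneg {r : ℝ} (hr : 0 ≤ r) : 0 ≤ bb r := by unfold bb; nlinarith

lemma key_lintegral (r : ℝ) (hr : 0 ≤ r) :
    ∫⁻ τ in SS r, ENNReal.ofReal ((jb (τ + r ^ 2))⁻¹) ≤ ENNReal.ofReal 100 := by
  have ha := one_add_aa_pos r
  calc ∫⁻ τ in SS r, ENNReal.ofReal ((jb (τ + r ^ 2))⁻¹)
      ≤ ∫⁻ _ in SS r, ENNReal.ofReal (2 / (1 + aa r)) :=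
        setLIntegral_mono measurable_const
          (fun τ hτ => ENNReal.ofReal_le_ofReal (pointwise_bound hτ.1))
    _ = ENNReal.ofReal (2 / (1 + aa r)) * volume (SS r) := setLIntegral_const _ _
    _ ≤ ENNReal.ofReal (2 / (1 + aa r)) * ENNReal.ofReal (2 * bb r) :=
        mul_le_mul_right (vol_SS r) _
    _ = ENNReal.ofReal (2 / (1 + aa r) * (2 * bb r)) :=
        (ENNReal.ofReal_mul (by positivity)).symm
    _ ≤ ENNReal.ofReal 100 := ENNReal.ofReal_le_ofReal (arith r hr)

lemma part1 (r : ℝ) (hr : 0 ≤ r) : ∫ τ in SS r, (jb (τ + r ^ 2))⁻¹ ≤ 100 := by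
  have ha := one_add_aa_pos r
  have hvol : volume (SS r) < ⊤ := lt_of_le_of_lt (vol_SS r) ENNReal.ofReal_lt_top
  calc ∫ τ in SS r, (jb (τ + r ^ 2))⁻¹ ≤ ‖∫ τ in SS r, (jb (τ + r ^ 2))⁻¹‖ :=
        le_abs_self _
    _ ≤ 2 / (1 + aa r) * (volume (SS r)).toReal := by
        apply norm_setIntegral_le_of_norm_le_const hvol
        intro τ hτ
        rw [Real.norm_eq_abs, abs_of_nonneg (inv_nonneg.2 (jb_pos _).le)]
        exact pointwise_bound hτ.1
    _ ≤ 2 / (1 + aa r) * (2 * bb r) := by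
        apply mul_le_mul_of_nonneg_left _ (by positivity)
        exact ENNReal.toReal_le_of_le_ofReal (by nlinarith [bb_nonneg hr]) (vol_SS r)
    _ ≤ 100 := arith r hr

lemma cont_nrm : Continuous fun p : (ℝ × ℝ) × ℝ => nrm p.1.1 p.1.2 :=
  Real.continuous_sqrt.comp (by fun_prop)

lemma cont_jb : Continuous jb := Real.continuous_sqrt.comp (by fun_prop)

lemma meas_B : MeasurableSet {p : (ℝ × ℝ) × ℝ | p.2 ∈ SS (nrm p.1.1 p.1.2)} := by
  have hn := cont_nrm
  have habs : Continuous fun p : (ℝ × ℝ) × ℝ => |p.2 + (nrm p.1.1 p.1.2) ^ 2| :=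
    (continuous_snd.add (hn.pow 2)).abs
  have ha : Continuous fun p : (ℝ × ℝ) × ℝ => aa (nrm p.1.1 p.1.2) := by
    unfold aa; fun_prop
  have hb : Continuous fun p : (ℝ × ℝ) × ℝ => bb (nrm p.1.1 p.1.2) := by
    unfold bb; fun_prop
  exact (measurableSet_le ha.measurable habs.measurable).inter
    (measurableSet_le habs.measurable hb.measurable)

open Classical in
lemma main2 (w : ℝ × ℝ → ℂ) (hw : Measurable w) :
    ∫⁻ p : (ℝ × ℝ) × ℝ,
      (‖(((jb (p.2 + (nrm p.1.1 p.1.2) ^ 2) ^ (-(1 / 2 : ℝ)) : ℝ)) : ℂ) * w p.1 *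
        (if p.2 ∈ SS (nrm p.1.1 p.1.2) then (1 : ℂ) else 0)‖₊ : ENNReal) ^ (2 : ℝ)
      ≤ ENNReal.ofReal 100 * ∫⁻ x, (‖w x‖₊ : ENNReal) ^ (2 : ℝ) := by
  have hpt : ∀ p : (ℝ × ℝ) × ℝ,
      (‖(((jb (p.2 + (nrm p.1.1 p.1.2) ^ 2) ^ (-(1 / 2 : ℝ)) : ℝ)) : ℂ) * w p.1 *
        (if p.2 ∈ SS (nrm p.1.1 p.1.2) then (1 : ℂ) else 0)‖₊ : ENNReal) ^ (2 : ℝ)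
      = ENNReal.ofReal (‖w p.1‖ ^ 2) *
        ENNReal.ofReal ((jb (p.2 + (nrm p.1.1 p.1.2) ^ 2))⁻¹ *
          (if p.2 ∈ SS (nrm p.1.1 p.1.2) then (1 : ℝ) else 0)) := by
    intro p
    set s := p.2 + (nrm p.1.1 p.1.2) ^ 2 with hs
    rw [← ENNReal.ofReal_coe_nnreal, coe_nnnorm,
      ENNReal.ofReal_rpow_of_nonneg (norm_nonneg _) (by norm_num),
      ← ENNReal.ofReal_mul (by positivity)]
    congr 1
    have hjb := jb_pos s
    have hsq : (jb s ^ (-(1 / 2 : ℝ))) ^ 2 = (jb s)⁻¹ := by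
      rw [← Real.rpow_natCast (jb s ^ (-(1 / 2 : ℝ))) 2, ← Real.rpow_mul hjb.le]
      norm_num [Real.rpow_neg_one]
    by_cases h : p.2 ∈ SS (nrm p.1.1 p.1.2)
    · rw [if_pos h, if_pos h, mul_one, mul_one]
      rw [Real.rpow_two, norm_mul, mul_pow, Complex.norm_real, Real.norm_eq_abs,
        abs_of_nonneg (Real.rpow_nonneg hjb.le _), hsq]
      ring
    · rw [if_neg h, if_neg h, mul_zero, mul_zero, norm_zero, Real.rpow_two]
      ring
  simp only [hpt]
  rw [Measure.volume_eq_prod, lintegral_prod]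
  · have hstep : ∀ ξ : ℝ × ℝ,
        (∫⁻ τ, ENNReal.ofReal (‖w ξ‖ ^ 2) *
          ENNReal.ofReal ((jb (τ + (nrm ξ.1 ξ.2) ^ 2))⁻¹ *
            (if τ ∈ SS (nrm ξ.1 ξ.2) then (1 : ℝ) else 0)))
        ≤ ENNReal.ofReal (‖w ξ‖ ^ 2) * ENNReal.ofReal 100 := by
      intro ξ
      set r := nrm ξ.1 ξ.2 with hr
      have hr0 : 0 ≤ r := Real.sqrt_nonneg _
      rw [lintegral_const_mul]
      · apply mul_le_mul_right
        have : (fun τ => ENNReal.ofReal ((jb (τ + r ^ 2))⁻¹ *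
            (if τ ∈ SS r then (1 : ℝ) else 0)))
            = (SS r).indicator (fun τ => ENNReal.ofReal ((jb (τ + r ^ 2))⁻¹)) := by
          funext τ
          by_cases h : τ ∈ SS r
          · simp [h]
          · simp [h]
        rw [this, lintegral_indicator (meas_SS r)]
        exact key_lintegral r hr0
      · apply ENNReal.measurable_ofReal.comp
        apply Measurable.fun_mul
        · exact ((cont_jb.comp (continuous_id.add continuous_const)).measurable).inv
        · exact Measurable.ite (by
            have := meas_SS r
            exact this) measurable_const measurable_const
    calc ∫⁻ ξ, ∫⁻ τ, ENNReal.ofReal (‖w ξ‖ ^ 2) *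
            ENNReal.ofReal ((jb (τ + (nrm ξ.1 ξ.2) ^ 2))⁻¹ *
              (if τ ∈ SS (nrm ξ.1 ξ.2) then (1 : ℝ) else 0))
        ≤ ∫⁻ ξ, ENNReal.ofReal (‖w ξ‖ ^ 2) * ENNReal.ofReal 100 :=
          lintegral_mono hstep
      _ = ENNReal.ofReal 100 * ∫⁻ ξ, ENNReal.ofReal (‖w ξ‖ ^ 2) := by
          rw [lintegral_mul_const]
          · rw [mul_comm]
          · exact ENNReal.measurable_ofReal.comp (hw.norm.pow_const 2)
      _ = ENNReal.ofReal 100 * ∫⁻ x, (‖w x‖₊ : ENNReal) ^ (2 : ℝ) := by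
          congr 1
          apply lintegral_congr
          intro x
          rw [← ENNReal.ofReal_coe_nnreal, coe_nnnorm,
            ENNReal.ofReal_rpow_of_nonneg (norm_nonneg _) (by norm_num),
            Real.rpow_two]
  · apply Measurable.aemeasurable
    apply Measurable.fun_mul
    · exact ENNReal.measurable_ofReal.comp ((hw.norm.pow_const 2).comp measurable_fst)
    · apply ENNReal.measurable_ofReal.comp
      apply Measurable.fun_mul
      · apply Measurable.inv
        exact (cont_jb.comp (continuous_snd.add (cont_nrm.pow 2))).measurable
      · exact Measurable.ite meas_B measurable_const measurable_const

open Classical in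
/-- There is `C > 0` such that for every `ξ ∈ ℝ²` the logarithmic integral
`∫_{(1/2)(|ξ|² - (3/2)|ξ|) ≤ |τ + |ξ|²| ≤ (3/2)(|ξ|² + (3/2)|ξ|)} ⟨τ + |ξ|²⟩⁻¹ dτ`
is bounded by `C`; consequently, for every `v ∈ L²(ℝ²)` the function
`(ξ, τ) ↦ ⟨τ + |ξ|²⟩^{-1/2} v(ξ) χ_B(τ, ξ)` belongs to `L²(ℝ² × ℝ)` with norm at
most `√C ‖v‖_{L²}`. -/
theorem logarithmic_cancellation :
    ∃ C : ℝ, 0 < C ∧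
      (∀ ξ₁ ξ₂ : ℝ,
        (∫ τ in {τ : ℝ |
            (1 / 2) * ((nrm ξ₁ ξ₂) ^ 2 - (3 / 2) * nrm ξ₁ ξ₂) ≤ |τ + (nrm ξ₁ ξ₂) ^ 2|
            ∧ |τ + (nrm ξ₁ ξ₂) ^ 2| ≤ (3 / 2) * ((nrm ξ₁ ξ₂) ^ 2 + (3 / 2) * nrm ξ₁ ξ₂)},
          (jb (τ + (nrm ξ₁ ξ₂) ^ 2))⁻¹) ≤ C)
      ∧ ∀ v : ℝ × ℝ → ℂ, MemLp v 2 (volume : Measure (ℝ × ℝ)) →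
          MemLp (fun p : (ℝ × ℝ) × ℝ =>
              ((jb (p.2 + (nrm p.1.1 p.1.2) ^ 2) ^ (-(1 / 2 : ℝ)) : ℝ) : ℂ) * v p.1 *
              (if ((1 / 2) * ((nrm p.1.1 p.1.2) ^ 2 - (3 / 2) * nrm p.1.1 p.1.2)
                      ≤ |p.2 + (nrm p.1.1 p.1.2) ^ 2|
                  ∧ |p.2 + (nrm p.1.1 p.1.2) ^ 2|
                      ≤ (3 / 2) * ((nrm p.1.1 p.1.2) ^ 2 + (3 / 2) * nrm p.1.1 p.1.2))
                then (1 : ℂ) else 0))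
            2 (volume : Measure ((ℝ × ℝ) × ℝ))
          ∧ eLpNorm (fun p : (ℝ × ℝ) × ℝ =>
              ((jb (p.2 + (nrm p.1.1 p.1.2) ^ 2) ^ (-(1 / 2 : ℝ)) : ℝ) : ℂ) * v p.1 *
              (if ((1 / 2) * ((nrm p.1.1 p.1.2) ^ 2 - (3 / 2) * nrm p.1.1 p.1.2)
                      ≤ |p.2 + (nrm p.1.1 p.1.2) ^ 2|
                  ∧ |p.2 + (nrm p.1.1 p.1.2) ^ 2|
                      ≤ (3 / 2) * ((nrm p.1.1 p.1.2) ^ 2 + (3 / 2) * nrm p.1.1 p.1.2))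
                then (1 : ℂ) else 0))
              2 (volume : Measure ((ℝ × ℝ) × ℝ))
            ≤ ENNReal.ofReal (Real.sqrt C) * eLpNorm v 2 (volume : Measure (ℝ × ℝ)) := by
  refine ⟨100, by norm_num, ?_, ?_⟩
  · intro ξ₁ ξ₂
    exact part1 (nrm ξ₁ ξ₂) (Real.sqrt_nonneg _)
  · intro v hv
    have hite : ∀ p : (ℝ × ℝ) × ℝ,
        (if ((1 / 2) * ((nrm p.1.1 p.1.2) ^ 2 - (3 / 2) * nrm p.1.1 p.1.2)
                ≤ |p.2 + (nrm p.1.1 p.1.2) ^ 2|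
            ∧ |p.2 + (nrm p.1.1 p.1.2) ^ 2|
                ≤ (3 / 2) * ((nrm p.1.1 p.1.2) ^ 2 + (3 / 2) * nrm p.1.1 p.1.2))
          then (1 : ℂ) else 0)
        = (if p.2 ∈ SS (nrm p.1.1 p.1.2) then (1 : ℂ) else 0) :=
      fun p => if_congr Iff.rfl rfl rfl
    simp only [hite]
    have hm := hv.1
    set w := hm.mk v with hwdef
    have hwsm : StronglyMeasurable w := hm.stronglyMeasurable_mk
    have hw : Measurable w := hwsm.measurable
    have hvw : v =ᵐ[(volume : Measure (ℝ × ℝ))] w := hm.ae_eq_mk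
    set G : (ℝ × ℝ) × ℝ → ℂ := fun p =>
        ((jb (p.2 + (nrm p.1.1 p.1.2) ^ 2) ^ (-(1 / 2 : ℝ)) : ℝ) : ℂ) * w p.1 *
        (if p.2 ∈ SS (nrm p.1.1 p.1.2) then (1 : ℂ) else 0) with hGdef
    set F : (ℝ × ℝ) × ℝ → ℂ := fun p =>
        ((jb (p.2 + (nrm p.1.1 p.1.2) ^ 2) ^ (-(1 / 2 : ℝ)) : ℝ) : ℂ) * v p.1 *
        (if p.2 ∈ SS (nrm p.1.1 p.1.2) then (1 : ℂ) else 0) with hFdef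
    have hnull : (volume : Measure (ℝ × ℝ)) {x | v x ≠ w x} = 0 := by
      have := hvw
      rwa [Filter.EventuallyEq, ae_iff] at this
    have hsub : {p : (ℝ × ℝ) × ℝ | F p ≠ G p} ⊆ {x | v x ≠ w x} ×ˢ Set.univ := by
      intro p hp
      refine ⟨fun hvp => hp ?_, trivial⟩
      rw [hFdef, hGdef]
      show ((jb (p.2 + (nrm p.1.1 p.1.2) ^ 2) ^ (-(1 / 2 : ℝ)) : ℝ) : ℂ) * v p.1 *
        (if p.2 ∈ SS (nrm p.1.1 p.1.2) then (1 : ℂ) else 0) =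
        ((jb (p.2 + (nrm p.1.1 p.1.2) ^ 2) ^ (-(1 / 2 : ℝ)) : ℝ) : ℂ) * w p.1 *
        (if p.2 ∈ SS (nrm p.1.1 p.1.2) then (1 : ℂ) else 0)
      rw [hvp]
    have hFG : F =ᵐ[(volume : Measure ((ℝ × ℝ) × ℝ))] G := by
      refine (ae_iff).2 (measure_mono_null hsub ?_)
      rw [Measure.volume_eq_prod, Measure.prod_prod, hnull, zero_mul]
    have hGmeas : Measurable G := by
      apply Measurable.fun_mul
      apply Measurable.fun_mul
      · exact Complex.measurable_ofReal.comp
          (((cont_jb.comp (continuous_snd.add (cont_nrm.pow 2))).rpow_const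
            (fun p => Or.inl (jb_pos _).ne')).measurable)
      · exact hw.comp measurable_fst
      · exact Measurable.ite meas_B measurable_const measurable_const
    have hGlp : eLpNorm G 2 (volume : Measure ((ℝ × ℝ) × ℝ))
        ≤ ENNReal.ofReal (Real.sqrt 100) * eLpNorm v 2 (volume : Measure (ℝ × ℝ)) := by
      rw [eLpNorm_eq_lintegral_rpow_enorm_toReal (by norm_num) (by norm_num),
        eLpNorm_eq_lintegral_rpow_enorm_toReal (p := 2) (μ := (volume : Measure (ℝ × ℝ)))
          (by norm_num) (by norm_num)]
      simp only [ENNReal.toReal_ofNat]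
      have hb := main2 w hw
      have hv2 : eLpNorm w 2 (volume : Measure (ℝ × ℝ)) =
          (∫⁻ x, (‖w x‖₊ : ENNReal) ^ (2 : ℝ)) ^ (1 / (2 : ℝ)) := by
        rw [eLpNorm_eq_lintegral_rpow_enorm_toReal (by norm_num) (by norm_num)]
        simp only [ENNReal.toReal_ofNat]
        rfl
      calc (∫⁻ p : (ℝ × ℝ) × ℝ, (‖G p‖₊ : ENNReal) ^ (2 : ℝ)) ^ (1 / (2 : ℝ))
          ≤ (ENNReal.ofReal 100 * ∫⁻ x, (‖w x‖₊ : ENNReal) ^ (2 : ℝ)) ^ (1 / (2 : ℝ)) := by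
            apply ENNReal.rpow_le_rpow _ (by norm_num)
            exact hb
        _ = ENNReal.ofReal 100 ^ (1 / (2 : ℝ)) *
            (∫⁻ x, (‖w x‖₊ : ENNReal) ^ (2 : ℝ)) ^ (1 / (2 : ℝ)) :=
            ENNReal.mul_rpow_of_nonneg _ _ (by norm_num)
        _ = ENNReal.ofReal (Real.sqrt 100) *
            (∫⁻ x, (‖v x‖₊ : ENNReal) ^ (2 : ℝ)) ^ (1 / (2 : ℝ)) := by
            congr 1
            · rw [ENNReal.ofReal_rpow_of_nonneg (by norm_num) (by norm_num),
                Real.sqrt_eq_rpow]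
            · congr 1
              apply lintegral_congr_ae
              filter_upwards [hvw] with x hx
              rw [hx]
    have hFlp : eLpNorm F 2 (volume : Measure ((ℝ × ℝ) × ℝ))
        ≤ ENNReal.ofReal (Real.sqrt 100) * eLpNorm v 2 (volume : Measure (ℝ × ℝ)) := by
      rw [eLpNorm_congr_ae hFG]; exact hGlp
    have hmemF : MemLp F 2 (volume : Measure ((ℝ × ℝ) × ℝ)) := by
      refine ⟨hGmeas.stronglyMeasurable.aestronglyMeasurable.congr hFG.symm, ?_⟩
      exact lt_of_le_of_lt hFlp (ENNReal.mul_lt_top ENNReal.ofReal_lt_top hv.2)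
    exact ⟨hmemF, hFlp⟩
end
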